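/- Let Z* ∈ ℝ^g and n_0 ∈ ℤ. Then there exists t_0 such that for every integer t ≥ t_0 there exists δ_0 > 0 such that for every δ ≥ δ_0 and every integer n with n_0 ≤ n ≤ n_0 + g + 1, the point Z* − (n − n_0)(L + δ)e_1 + tλ⃗ belongs to D̃_{m_n}, where m_n = 𝕀_1 + 𝕀_2 + ⋯ + 𝕀_{n−n_0−1} (with m_n = 0 for n ∈ {n_0, n_0+1}). -/

import Mathlib

/-!
Write a competitor as `x = m + y` with `m = 𝕀_1 + ⋯ + 𝕀_{ν-1}`, `ν = n - n₀` and `y ∈ ℤ^g`, and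
read `y` as the path `Y = (0, y₁, …, y_g, 0)`. Then `y J yᵀ = ∑ (Y_{k+1} - Y_k)²` and
`m J = ν e₁ - e_ν`, so the theta term of `x` exceeds that of `m` by `δ c + R(y) + t y·λ⃗`, where
`c = ½ y J yᵀ - Y_ν` and `R` is a quadratic function of `y` independent of `t` and `δ`.
Since `c = ∑_{k<ν} d_k (d_k - 1)/2 + ∑_{k≥ν} d_k (d_k + 1)/2` for the increments `d_k` of `Y`,
`c` is a nonnegative integer. If `c ≥ 1` then `|y|² = O(c)`, and a large `δ` wins. If `c = 0`
the path rises by steps `0, 1` up to `ν` and falls by steps `0, -1` after, so `0 ≤ y ≤ g + 1`;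
then `|R(y)| = O(∑ yᵢ)`, which `t y·λ⃗` beats for large `t` because the generic condition
makes every coordinate of `λ⃗` positive.
-/

open Matrix Finset

noncomputable section

namespace TropToda

variable (g : ℕ)

/-- The summand `(1/2) m K mᵀ + m Zᵀ` in the definition of the tropical theta function. -/
def thetaTerm (K : Matrix (Fin g) (Fin g) ℝ) (m : Fin g → ℤ) (Z : Fin g → ℝ) : ℝ :=
  (1/2) * (Matrix.vecMul (fun i => (m i : ℝ)) K ⬝ᵥ fun i => (m i : ℝ))
    + (fun i => (m i : ℝ)) ⬝ᵥ Z

/-- The tropical Riemann theta function associated with `K`. -/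
def theta (K : Matrix (Fin g) (Fin g) ℝ) (Z : Fin g → ℝ) : ℝ :=
  sInf (Set.range fun m : Fin g → ℤ => thetaTerm g K m Z)

/-- The fundamental region `D_m`. -/
def Dset (K : Matrix (Fin g) (Fin g) ℝ) (m : Fin g → ℤ) : Set (Fin g → ℝ) :=
  {Z | theta g K Z = thetaTerm g K m Z}

/-- The generic condition on `C = (C_{-1}, C_0, …, C_g)`. -/
def Generic (C : ℤ → ℝ) : Prop :=
  C (-1) > 2 * C 0 ∧
  (∀ i : ℤ, 0 ≤ i → i ≤ (g : ℤ) - 2 → C i + C (i + 2) > 2 * C (i + 1)) ∧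
  C ((g : ℤ) - 1) > 2 * C (g : ℤ)

/-- `L = C_{-1} − 2(g+1) C_g`. -/
def Lc (C : ℤ → ℝ) : ℝ := C (-1) - 2 * (g + 1) * C (g : ℤ)

/-- `λ_0 = C_g`, `λ_i = C_{g−i} − C_{g−i+1}` for `1 ≤ i ≤ g`. -/
def lam (C : ℤ → ℝ) (i : ℕ) : ℝ :=
  if i = 0 then C (g : ℤ) else C ((g : ℤ) - i) - C ((g : ℤ) - i + 1)

/-- `p_0 = L`, `p_i = L − 2 ∑_{j=1}^g min(λ_i − λ_0, λ_j − λ_0)`. -/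
def pc (C : ℤ → ℝ) (i : ℕ) : ℝ :=
  if i = 0 then Lc g C
  else Lc g C - 2 * ∑ j ∈ Finset.Icc 1 g,
    min (lam g C i - lam g C 0) (lam g C j - lam g C 0)

/-- The tridiagonal period matrix `K` (0-based index `a` corresponds to the paper's `a+1`). -/
def Kmat (C : ℤ → ℝ) : Matrix (Fin g) (Fin g) ℝ := fun a b =>
  if a = b then
    pc g C (a : ℕ) + pc g C ((a : ℕ) + 1) + 2 * (lam g C ((a : ℕ) + 1) - lam g C (a : ℕ))
  else if (a : ℕ) + 1 = (b : ℕ) then -(pc g C ((a : ℕ) + 1))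
  else if (b : ℕ) + 1 = (a : ℕ) then -(pc g C ((b : ℕ) + 1))
  else 0

/-- The first standard basis (row) vector `e_1`. -/
def e1 : Fin g → ℝ := fun i => if (i : ℕ) = 0 then 1 else 0

/-- `λ⃗ = (λ_1 − λ_0, …, λ_g − λ_{g−1})`. -/
def lamvec (C : ℤ → ℝ) : Fin g → ℝ := fun i => lam g C ((i : ℕ) + 1) - lam g C (i : ℕ)

/-- `Z_n^t = Z_0 − nL e_1 + t λ⃗`. -/
def Zpt (C : ℤ → ℝ) (Z0 : Fin g → ℝ) (n t : ℤ) : Fin g → ℝ :=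
  fun i => Z0 i - (n : ℝ) * Lc g C * e1 g i + (t : ℝ) * lamvec g C i

/-- `T_n^t = Θ(Z_n^t)`. -/
def Tf (C : ℤ → ℝ) (Z0 : Fin g → ℝ) (n t : ℤ) : ℝ :=
  theta g (Kmat g C) (Zpt g C Z0 n t)

/-- `Q_n^t = T_{n−1}^t + T_n^{t+1} − T_{n−1}^{t+1} − T_n^t + C_g`. -/
def Qf (C : ℤ → ℝ) (Z0 : Fin g → ℝ) (n t : ℤ) : ℝ :=
  Tf g C Z0 (n - 1) t + Tf g C Z0 n (t + 1) - Tf g C Z0 (n - 1) (t + 1)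
    - Tf g C Z0 n t + C (g : ℤ)

/-- `W_n^t = L + T_{n−1}^{t+1} + T_{n+1}^t − T_n^t − T_n^{t+1} + C_g`. -/
def Wf (C : ℤ → ℝ) (Z0 : Fin g → ℝ) (n t : ℤ) : ℝ :=
  Lc g C + Tf g C Z0 (n - 1) (t + 1) + Tf g C Z0 (n + 1) t - Tf g C Z0 n t
    - Tf g C Z0 n (t + 1) + C (g : ℤ)

/-- `σ_t ∘ ι_t : ℝ^g → ℝ^{2(g+1)}`, recording `(Q_n^t, W_n^t)_{n ∈ ℤ/(g+1)ℤ}`. -/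
def sigmaIota (C : ℤ → ℝ) (t : ℤ) (Z0 : Fin g → ℝ) :
    (ZMod (g + 1) → ℝ) × (ZMod (g + 1) → ℝ) :=
  (fun n => Qf g C Z0 (n.val : ℤ) t, fun n => Wf g C Z0 (n.val : ℤ) t)

/-- The tridiagonal matrix `J` with `2` on the diagonal and `−1` off it. -/
def Jmat : Matrix (Fin g) (Fin g) ℝ := fun a b =>
  if a = b then 2
  else if (a : ℕ) + 1 = (b : ℕ) then -1
  else if (b : ℕ) + 1 = (a : ℕ) then -1
  else 0

/-- `X_n = min_{k=0,…,g} ∑_{l=1}^k (W_{n−l} − Q_{n−l})`, indices mod `g+1`. -/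
def todaX (Q W : ZMod (g + 1) → ℝ) (n : ZMod (g + 1)) : ℝ :=
  ⨅ k : Fin (g + 1), ∑ l ∈ Finset.Icc 1 (k : ℕ),
    (W (n - (l : ZMod (g + 1))) - Q (n - (l : ZMod (g + 1))))

/-- The ultra-discrete periodic Toda evolution map. -/
def todaMap (QW : (ZMod (g + 1) → ℝ) × (ZMod (g + 1) → ℝ)) :
    (ZMod (g + 1) → ℝ) × (ZMod (g + 1) → ℝ) :=
  (fun n => min (QW.2 n) (QW.1 n - todaX g QW.1 QW.2 n),
   fun n => QW.1 (n + 1) + QW.2 n - min (QW.2 n) (QW.1 n - todaX g QW.1 QW.2 n))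

/-- `Z̃_n^t = Z_{n_0}^0 − (n − n_0)(L + δ) e_1 + t λ⃗`. -/
def Ztil (C : ℤ → ℝ) (Z0 : Fin g → ℝ) (n0 : ℤ) (δ : ℝ) (n t : ℤ) : Fin g → ℝ :=
  fun i => Zpt g C Z0 n0 0 i - ((n : ℝ) - (n0 : ℝ)) * (Lc g C + δ) * e1 g i
    + (t : ℝ) * lamvec g C i

/-- The theta function `Θ̃` associated with `K̃ = K + δJ`. -/
def thetaTil (C : ℤ → ℝ) (δ : ℝ) (Z : Fin g → ℝ) : ℝ :=
  theta g (Kmat g C + δ • Jmat g) Z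

/-- `Q̃_n`. -/
def Qtil (C : ℤ → ℝ) (Z0 : Fin g → ℝ) (n0 : ℤ) (δ : ℝ) (n : ℤ) : ℝ :=
  thetaTil g C δ (Ztil g C Z0 n0 δ (n - 1) 0) + thetaTil g C δ (Ztil g C Z0 n0 δ n 1)
    - thetaTil g C δ (Ztil g C Z0 n0 δ (n - 1) 1) - thetaTil g C δ (Ztil g C Z0 n0 δ n 0)

/-- `W̃_n`. -/
def Wtil (C : ℤ → ℝ) (Z0 : Fin g → ℝ) (n0 : ℤ) (δ : ℝ) (n : ℤ) : ℝ :=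
  (Lc g C + δ) + thetaTil g C δ (Ztil g C Z0 n0 δ (n - 1) 1)
    + thetaTil g C δ (Ztil g C Z0 n0 δ (n + 1) 0)
    - thetaTil g C δ (Ztil g C Z0 n0 δ n 0) - thetaTil g C δ (Ztil g C Z0 n0 δ n 1)

end TropToda

namespace TropToda

section Sequences

variable {N ν : ℕ}

theorem sum_range_sub_mul_sign {R : Type*} [CommRing R] {Y : ℕ → R} (h0 : Y 0 = 0)
    (hN : Y N = 0) (hν : ν ≤ N) :
    ∑ k ∈ range N, (Y (k + 1) - Y k) * (if k < ν then 1 else -1) = 2 * Y ν := by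
  have hIco : ∑ k ∈ Ico ν N, (Y (k + 1) - Y k) = -Y ν := by
    have := sum_range_add_sum_Ico (fun k => Y (k + 1) - Y k) hν
    rw [sum_range_sub, sum_range_sub, h0, hN] at this
    linear_combination this
  have hlow : ∑ k ∈ range ν, (Y (k + 1) - Y k) * (if k < ν then 1 else -1)
      = ∑ k ∈ range ν, (Y (k + 1) - Y k) :=
    sum_congr rfl fun k hk => by rw [if_pos (mem_range.1 hk), mul_one]
  have hhigh : ∑ k ∈ Ico ν N, (Y (k + 1) - Y k) * (if k < ν then 1 else -1)
      = -∑ k ∈ Ico ν N, (Y (k + 1) - Y k) := by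
    rw [← sum_neg_distrib]
    exact sum_congr rfl fun k hk => by rw [if_neg (not_lt.2 (mem_Ico.1 hk).1), mul_neg_one]
  rw [← sum_range_add_sum_Ico _ hν, hlow, hhigh, hIco, sum_range_sub, h0]
  ring

theorem sum_range_sq_sub_two_mul {R : Type*} [CommRing R] {Y : ℕ → R} (h0 : Y 0 = 0)
    (hN : Y N = 0) (hν : ν ≤ N) :
    ∑ k ∈ range N, (Y (k + 1) - Y k) ^ 2 - 2 * Y ν
      = ∑ k ∈ range N, (Y (k + 1) - Y k) * (Y (k + 1) - Y k - if k < ν then 1 else -1) := by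
  simp only [mul_sub, sum_sub_distrib, sq, sum_range_sub_mul_sign h0 hN hν]

theorem mul_sub_sign_nonneg_and_even (d : ℤ) (p : Prop) [Decidable p] :
    0 ≤ d * (d - if p then 1 else -1) ∧ Even (d * (d - if p then 1 else -1)) := by
  split_ifs
  · exact ⟨by nlinarith [Int.le_self_sq d], Int.even_mul_pred_self d⟩
  · rw [sub_neg_eq_add]; exact ⟨by nlinarith [Int.le_self_sq (-d)], Int.even_mul_succ_self d⟩

theorem exists_sum_range_sq_eq {Y : ℕ → ℤ} (h0 : Y 0 = 0) (hN : Y N = 0) (hν : ν ≤ N) :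
    ∃ c : ℤ, 0 ≤ c ∧ ∑ k ∈ range N, (Y (k + 1) - Y k) ^ 2 = 2 * Y ν + 2 * c := by
  obtain ⟨c, hc⟩ := even_sum _ fun k _ => (mul_sub_sign_nonneg_and_even (Y (k + 1) - Y k) (k < ν)).2
  have hc0 := sum_nonneg fun k (_ : k ∈ range N) =>
    (mul_sub_sign_nonneg_and_even (Y (k + 1) - Y k) (k < ν)).1
  rw [← sum_range_sq_sub_two_mul h0 hN hν] at hc hc0
  exact ⟨c, by omega, by omega⟩

theorem nonneg_of_sum_range_sq_eq {Y : ℕ → ℤ} (h0 : Y 0 = 0) (hN : Y N = 0) (hν : ν ≤ N)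
    (heq : ∑ k ∈ range N, (Y (k + 1) - Y k) ^ 2 = 2 * Y ν) {j : ℕ} (hj : j ≤ N) : 0 ≤ Y j := by
  have hzero := sum_range_sq_sub_two_mul h0 hN hν
  rw [heq, sub_self, eq_comm, sum_eq_zero_iff_of_nonneg fun k _ =>
    (mul_sub_sign_nonneg_and_even (Y (k + 1) - Y k) (k < ν)).1] at hzero
  have hsign : ∀ k < N, (k < ν → 0 ≤ Y (k + 1) - Y k) ∧ (ν ≤ k → Y (k + 1) - Y k ≤ 0) := by
    intro k hk
    have := hzero k (mem_range.2 hk)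
    constructor <;> intro h
    · rw [if_pos h] at this; nlinarith [Int.le_self_sq (Y (k + 1) - Y k)]
    · rw [if_neg (not_lt.2 h)] at this; nlinarith [Int.le_self_sq (Y (k + 1) - Y k)]
  rcases le_total j ν with h | h
  · rw [show Y j = ∑ k ∈ range j, (Y (k + 1) - Y k) by rw [sum_range_sub, h0, sub_zero]]
    exact sum_nonneg fun k hk => by
      have := mem_range.1 hk
      exact (hsign k (by omega)).1 (by omega)
  · have hsplit := sum_range_add_sum_Ico (fun k => Y (k + 1) - Y k) hj
    rw [sum_range_sub, sum_range_sub, h0, hN] at hsplit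
    have : ∑ k ∈ Ico j N, (Y (k + 1) - Y k) ≤ 0 :=
      sum_nonpos fun k hk => (hsign k (mem_Ico.1 hk).2).2 (h.trans (mem_Ico.1 hk).1)
    linarith

theorem sum_range_sq_le {R : Type*} [CommRing R] [LinearOrder R] [IsStrictOrderedRing R]
    {Y : ℕ → R} (h0 : Y 0 = 0) (hN : Y N = 0) (hν : ν ≤ N) :
    ∑ k ∈ range N, (Y (k + 1) - Y k) ^ 2
      ≤ 2 * (∑ k ∈ range N, (Y (k + 1) - Y k) ^ 2 - 2 * Y ν) + N := by
  rw [sum_range_sq_sub_two_mul h0 hN hν, mul_sum]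
  calc _ ≤ ∑ k ∈ range N,
        (2 * ((Y (k + 1) - Y k) * (Y (k + 1) - Y k - if k < ν then 1 else -1)) + 1) :=
        sum_le_sum fun k _ => by
          split_ifs <;> nlinarith [sq_nonneg (Y (k + 1) - Y k - 1), sq_nonneg (Y (k + 1) - Y k + 1)]
    _ = _ := by simp [sum_add_distrib]

theorem sq_le_mul_sum_range_sq {Y : ℕ → ℤ} (h0 : Y 0 = 0) {j : ℕ} (hj : j ≤ N) :
    Y j ^ 2 ≤ N * ∑ k ∈ range N, (Y (k + 1) - Y k) ^ 2 := by
  have hY : Y j = ∑ k ∈ range j, (Y (k + 1) - Y k) := by rw [sum_range_sub, h0, sub_zero]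
  calc Y j ^ 2 ≤ j * ∑ k ∈ range j, (Y (k + 1) - Y k) ^ 2 := by
        simpa [hY] using sq_sum_le_card_mul_sum_sq (s := range j) (f := fun k => Y (k + 1) - Y k)
    _ ≤ N * ∑ k ∈ range N, (Y (k + 1) - Y k) ^ 2 := by
        gcongr

theorem sum_range_sub_mul_sub {R : Type*} [CommRing R] (U : ℕ → R) {V : ℕ → R}
    (h0 : V 0 = 0) (hN : V (N + 1) = 0) :
    ∑ k ∈ range (N + 1), (U (k + 1) - U k) * (V (k + 1) - V k)
      = ∑ k ∈ range N, (2 * U (k + 1) - U k - U (k + 2)) * V (k + 1) := by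
  simp only [mul_sub, sum_sub_distrib]
  rw [sum_range_succ, sum_range_succ' (fun k => (U (k + 1) - U k) * V k), hN, h0]
  simp only [mul_zero, add_zero]
  rw [← sum_sub_distrib]
  exact sum_congr rfl fun k _ => by ring

end Sequences

section Pad

variable {g : ℕ}

/-- `v` read with 1-based indices and extended by zero: `0, v₀, …, v_{g-1}, 0, 0, …`. -/
def pad {R : Type*} [Zero R] (v : Fin g → R) (k : ℕ) : R :=
  if h : k ≠ 0 ∧ k ≤ g then v ⟨k - 1, by omega⟩ else 0

variable {R : Type*}

@[simp] theorem pad_zero [Zero R] (v : Fin g → R) : pad v 0 = 0 := by simp [pad]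

theorem pad_of_lt [Zero R] (v : Fin g → R) {k : ℕ} (h : g < k) : pad v k = 0 := by
  rw [pad, dif_neg (by omega)]

@[simp] theorem pad_succ [Zero R] (v : Fin g → R) (i : Fin g) : pad v (i + 1) = v i := by
  rw [pad, dif_pos ⟨by omega, i.2⟩]; rfl

theorem pad_intCast [AddGroupWithOne R] (v : Fin g → ℤ) (k : ℕ) :
    pad (fun i => (v i : R)) k = ((pad v k : ℤ) : R) := by
  unfold pad; split_ifs <;> simp

theorem sum_ite_eq_pad [AddCommMonoid R] (v : Fin g → R) (k : ℕ) :
    ∑ j : Fin g, (if (j : ℕ) + 1 = k then v j else 0) = pad v k := by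
  by_cases hk : k ≠ 0 ∧ k ≤ g
  · rw [pad, dif_pos hk, Fintype.sum_eq_single ⟨k - 1, by omega⟩
      fun j hj => if_neg fun h => hj (Fin.ext (by simp only; omega)), if_pos (by simp only; omega)]
  · rw [pad, dif_neg hk]
    exact sum_eq_zero fun j _ => if_neg (by omega)

end Pad

section Jmat

variable {g : ℕ}

theorem vecMul_Jmat_apply (u : Fin g → ℝ) (j : Fin g) :
    (u ᵥ* Jmat g) j = 2 * pad u (j + 1) - pad u j - pad u (j + 2) := by
  have hsplit : ∀ i, u i * Jmat g i j = (if i = j then 2 * u i else 0)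
      - (if (i : ℕ) + 1 = j then u i else 0) - (if (i : ℕ) + 1 = j + 2 then u i else 0) := by
    intro i
    unfold Jmat
    simp only [Fin.ext_iff]
    split_ifs <;> first | omega | ring
  simp only [vecMul, dotProduct, hsplit, sum_sub_distrib, sum_ite_eq', mem_univ, if_true,
    sum_ite_eq_pad, pad_succ]

theorem vecMul_Jmat_dotProduct (u v : Fin g → ℝ) :
    u ᵥ* Jmat g ⬝ᵥ v
      = ∑ k ∈ range (g + 1), (pad u (k + 1) - pad u k) * (pad v (k + 1) - pad v k) := by
  rw [sum_range_sub_mul_sub _ (pad_zero v) (pad_of_lt v (lt_add_one g)), dotProduct,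
    ← Fin.sum_univ_eq_sum_range]
  simp only [vecMul_Jmat_apply, pad_succ]

theorem Jmat_isSymm : (Jmat g).IsSymm :=
  Matrix.IsSymm.ext fun i j => by
    unfold Jmat
    simp only [Fin.ext_iff]
    split_ifs <;> first | rfl | omega

theorem Kmat_isSymm (C : ℤ → ℝ) : (Kmat g C).IsSymm :=
  Matrix.IsSymm.ext fun i j => by
    unfold Kmat
    rcases eq_or_ne i j with rfl | h
    · rfl
    · rw [if_neg h, if_neg (Ne.symm h)]
      split_ifs <;> first | rfl | omega

end Jmat

section Stair

variable {g ν : ℕ}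

/-- The paper's `𝕀_1 + ⋯ + 𝕀_{ν-1}`. -/
def stairVec (g ν : ℕ) : Fin g → ℤ := fun i => max 0 ((ν : ℤ) - 1 - (i : ℕ))

theorem stairVec_nonneg_le (hν : ν ≤ g + 1) (i : Fin g) :
    0 ≤ stairVec g ν i ∧ stairVec g ν i ≤ g := by
  simp only [stairVec]; omega

theorem vecMul_stairVec_Jmat_apply (hν : ν ≤ g + 1) (j : Fin g) :
    ((fun i => (stairVec g ν i : ℝ)) ᵥ* Jmat g) j
      = ν * e1 g j - if (j : ℕ) + 1 = ν then 1 else 0 := by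
  have key : 2 * pad (stairVec g ν) (j + 1) - pad (stairVec g ν) j - pad (stairVec g ν) (j + 2)
      = (ν : ℤ) * (if (j : ℕ) = 0 then 1 else 0) - if (j : ℕ) + 1 = ν then 1 else 0 := by
    simp only [pad, stairVec]
    split_ifs <;> omega
  rw [vecMul_Jmat_apply]
  simp only [pad_intCast, e1]
  exact_mod_cast key

theorem vecMul_stairVec_Jmat_dotProduct (hν : ν ≤ g + 1) (v : Fin g → ℝ) :
    (fun i => (stairVec g ν i : ℝ)) ᵥ* Jmat g ⬝ᵥ v = ν * (e1 g ⬝ᵥ v) - pad v ν := by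
  simp only [dotProduct, vecMul_stairVec_Jmat_apply hν, sub_mul, sum_sub_distrib, mul_assoc,
    ← mul_sum, ite_mul, one_mul, zero_mul, sum_ite_eq_pad]

end Stair

section Theta

variable {g : ℕ}

theorem mem_Dset_of_forall_le {K : Matrix (Fin g) (Fin g) ℝ} {m : Fin g → ℤ} {Z : Fin g → ℝ}
    (h : ∀ x, thetaTerm g K m Z ≤ thetaTerm g K x Z) : Z ∈ Dset g K m :=
  le_antisymm (csInf_le ⟨_, by rintro _ ⟨x, rfl⟩; exact h x⟩ ⟨m, rfl⟩)
    (le_csInf ⟨_, m, rfl⟩ (by rintro _ ⟨x, rfl⟩; exact h x))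

theorem vecMul_dotProduct_comm {R n : Type*} [CommSemiring R] [Fintype n] {K : Matrix n n R}
    (hK : K.IsSymm) (u v : n → R) : u ᵥ* K ⬝ᵥ v = v ᵥ* K ⬝ᵥ u := by
  rw [← dotProduct_mulVec, ← vecMul_transpose, hK.eq, dotProduct_comm]

theorem thetaTerm_eq_add {K : Matrix (Fin g) (Fin g) ℝ} (hK : K.IsSymm) (m x : Fin g → ℤ)
    (Z : Fin g → ℝ) :
    thetaTerm g K x Z = thetaTerm g K m Z
      + (1 / 2 * ((fun i => ((x i - m i : ℤ) : ℝ)) ᵥ* K ⬝ᵥ fun i => ((x i - m i : ℤ) : ℝ))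
        + (fun i => (m i : ℝ)) ᵥ* K ⬝ᵥ (fun i => ((x i - m i : ℤ) : ℝ))
        + (fun i => ((x i - m i : ℤ) : ℝ)) ⬝ᵥ Z) := by
  have hx : (fun i => (x i : ℝ)) = (fun i => (m i : ℝ)) + fun i => ((x i - m i : ℤ) : ℝ) := by
    funext i; simp
  unfold thetaTerm
  rw [hx, add_vecMul, add_dotProduct, dotProduct_add, dotProduct_add, add_dotProduct,
    vecMul_dotProduct_comm hK (fun i => ((x i - m i : ℤ) : ℝ)) (fun i => (m i : ℝ))]
  ring

end Theta

section Bounds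

variable {m n R : Type*} [Fintype m] [Fintype n]
  [CommRing R] [LinearOrder R] [IsStrictOrderedRing R]

theorem abs_vecMul_dotProduct_le (M : Matrix m n R) {u : m → R} {v : n → R} {s : R}
    (h : ∀ i j, |u i * v j| ≤ s) : |u ᵥ* M ⬝ᵥ v| ≤ (∑ i, ∑ j, |M i j|) * s := by
  have hexp : u ᵥ* M ⬝ᵥ v = ∑ i, ∑ j, M i j * (u i * v j) := by
    simp only [dotProduct, vecMul, sum_mul]
    rw [sum_comm]
    exact sum_congr rfl fun i _ => sum_congr rfl fun j _ => by ring
  rw [hexp, sum_mul]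
  refine (abs_sum_le_sum_abs _ _).trans (sum_le_sum fun i _ => ?_)
  rw [sum_mul]
  refine (abs_sum_le_sum_abs _ _).trans (sum_le_sum fun j _ => ?_)
  rw [abs_mul]
  exact mul_le_mul_of_nonneg_left (h i j) (abs_nonneg _)

theorem abs_dotProduct_le {u v : n → R} {s : R} (h : ∀ i, |u i| ≤ s) :
    |u ⬝ᵥ v| ≤ (∑ i, |v i|) * s := by
  rw [sum_mul]
  refine (abs_sum_le_sum_abs _ _).trans (sum_le_sum fun i _ => ?_)
  rw [abs_mul, mul_comm]
  exact mul_le_mul_of_nonneg_left (h i) (abs_nonneg _)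

theorem abs_intCast_le_sum_sq (y : n → ℤ) (i : n) : |(y i : R)| ≤ ∑ j, (y j : R) ^ 2 := by
  have : |(y i : R)| ≤ (y i : R) ^ 2 := by
    exact_mod_cast Int.natAbs_le_self_sq (y i)
  exact this.trans (single_le_sum (fun k _ => sq_nonneg (y k : R)) (mem_univ i))

theorem abs_mul_le_sum_sq (y : n → R) (i j : n) : |y i * y j| ≤ ∑ k, y k ^ 2 := by
  have hi := single_le_sum (fun k _ => sq_nonneg (y k)) (mem_univ i)
  have hj := single_le_sum (fun k _ => sq_nonneg (y k)) (mem_univ j)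
  rw [abs_mul]
  nlinarith [sq_nonneg (|y i| - |y j|), sq_abs (y i), sq_abs (y j)]

end Bounds

section Estimates

variable {g ν : ℕ} {C : ℤ → ℝ} {Zs : Fin g → ℝ}

theorem lamvec_pos (hC : Generic g C) (i : Fin g) : 0 < lamvec g C i := by
  obtain ⟨-, hmid, hlast⟩ := hC
  rcases i with ⟨i, hi⟩
  simp only [lamvec, lam, Nat.add_eq_zero_iff, one_ne_zero, and_false, if_false]
  rcases Nat.eq_zero_or_pos i with rfl | hpos
  · simp only [if_true, Nat.cast_zero, zero_add, Nat.cast_one, sub_add_cancel]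
    linarith
  · have h := hmid ((g : ℤ) - i - 1) (by omega) (by omega)
    rw [if_neg hpos.ne']
    push_cast
    ring_nf at h ⊢
    linarith

def energy (y : Fin g → ℤ) : ℤ := ∑ k ∈ range (g + 1), (pad y (k + 1) - pad y k) ^ 2

theorem intCast_vecMul_Jmat_dotProduct (y : Fin g → ℤ) :
    (fun i => (y i : ℝ)) ᵥ* Jmat g ⬝ᵥ (fun i => (y i : ℝ)) = energy y := by
  simp only [vecMul_Jmat_dotProduct, pad_intCast, energy]
  push_cast
  simp only [sq]

theorem sq_le_energy (y : Fin g → ℤ) (i : Fin g) : y i ^ 2 ≤ (g + 1) * energy y := by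
  have h := sq_le_mul_sum_range_sq (pad_zero y) (N := g + 1) (j := i + 1) (by omega)
  rw [pad_succ] at h
  exact_mod_cast h

theorem sum_sq_le_energy (y : Fin g → ℤ) : ∑ i, y i ^ 2 ≤ g * ((g + 1) * energy y) := by
  simpa using sum_le_card_nsmul univ _ _ fun i _ => sq_le_energy y i

/-- The part of `thetaTerm (stairVec g ν + y) - thetaTerm (stairVec g ν)` at the points of
the theorem that involves neither `δ` nor `t`. -/
def residual (g : ℕ) (C : ℤ → ℝ) (Zs : Fin g → ℝ) (ν : ℕ) (y : Fin g → ℝ) : ℝ :=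
  1 / 2 * (y ᵥ* Kmat g C ⬝ᵥ y) + (fun i => (stairVec g ν i : ℝ)) ᵥ* Kmat g C ⬝ᵥ y + y ⬝ᵥ Zs
    - ν * Lc g C * (e1 g ⬝ᵥ y)

theorem exists_abs_residual_le (g : ℕ) (C : ℤ → ℝ) (Zs : Fin g → ℝ) :
    ∃ A, 0 ≤ A ∧ ∀ ν ≤ g + 1, ∀ y : Fin g → ℤ,
      |residual g C Zs ν (fun i => (y i : ℝ))| ≤ A * ∑ i, (y i : ℝ) ^ 2 := by
  set κ := ∑ i, ∑ j, |Kmat g C i j|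
  refine ⟨κ / 2 + κ * g + ∑ i, |Zs i| + (g + 1) * |Lc g C| * ∑ i, |e1 g i|, by positivity,
    fun ν hν y => ?_⟩
  set s := ∑ i, (y i : ℝ) ^ 2
  have hquad : |(fun i => (y i : ℝ)) ᵥ* Kmat g C ⬝ᵥ fun i => (y i : ℝ)| ≤ κ * s :=
    abs_vecMul_dotProduct_le _ fun i j => abs_mul_le_sum_sq (fun k => (y k : ℝ)) i j
  have hcross : |(fun i => (stairVec g ν i : ℝ)) ᵥ* Kmat g C ⬝ᵥ fun i => (y i : ℝ)| ≤ κ * (g * s) :=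
    abs_vecMul_dotProduct_le _ fun i j => by
      have hm := stairVec_nonneg_le hν i
      rw [abs_mul, abs_of_nonneg (by exact_mod_cast hm.1)]
      exact mul_le_mul (by exact_mod_cast hm.2) (abs_intCast_le_sum_sq y j) (abs_nonneg _)
        (Nat.cast_nonneg g)
  have hZ : |(fun i => (y i : ℝ)) ⬝ᵥ Zs| ≤ (∑ i, |Zs i|) * s :=
    abs_dotProduct_le (abs_intCast_le_sum_sq y)
  have he1 : |(ν : ℝ) * Lc g C * (e1 g ⬝ᵥ fun i => (y i : ℝ))|
      ≤ (g + 1) * |Lc g C| * ((∑ i, |e1 g i|) * s) := by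
    rw [abs_mul, abs_mul, Nat.abs_cast, dotProduct_comm]
    gcongr
    · exact_mod_cast hν
    · exact abs_dotProduct_le (abs_intCast_le_sum_sq y)
  unfold residual
  refine (abs_sub _ _).trans ?_
  have := abs_add_three (1 / 2 * ((fun i => (y i : ℝ)) ᵥ* Kmat g C ⬝ᵥ fun i => (y i : ℝ)))
    ((fun i => (stairVec g ν i : ℝ)) ᵥ* Kmat g C ⬝ᵥ fun i => (y i : ℝ))
    ((fun i => (y i : ℝ)) ⬝ᵥ Zs)
  rw [abs_mul, abs_of_pos (by norm_num : (0 : ℝ) < 1 / 2)] at this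
  nlinarith

variable {A t δ : ℝ}

theorem residual_add_nonneg_of_energy_eq (hν : ν ≤ g + 1) (hA0 : 0 ≤ A)
    (hA : ∀ y : Fin g → ℤ, |residual g C Zs ν (fun i => (y i : ℝ))| ≤ A * ∑ i, (y i : ℝ) ^ 2)
    (ht : ∀ i, A * (g + 1) ≤ t * lamvec g C i) {y : Fin g → ℤ} (hy : energy y = 2 * pad y ν) :
    0 ≤ residual g C Zs ν (fun i => (y i : ℝ)) + t * ((fun i => (y i : ℝ)) ⬝ᵥ lamvec g C) := by
  have hy0 : ∀ i, 0 ≤ y i := fun i => by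
    rw [← pad_succ y i]
    exact nonneg_of_sum_range_sq_eq (pad_zero y) (pad_of_lt y (lt_add_one g)) hν hy (by omega)
  have hE : energy y ≤ g + 1 := by
    have := sum_range_sq_le (pad_zero y) (pad_of_lt y (lt_add_one g)) hν
    rw [← energy, hy] at this
    push_cast at this
    linarith
  have hsq : ∑ i, (y i : ℝ) ^ 2 ≤ (g + 1) * ∑ i, (y i : ℝ) := by
    rw [mul_sum]
    refine sum_le_sum fun i _ => ?_
    have hyi : y i ≤ g + 1 := by nlinarith [sq_le_energy y i, hy0 i]
    exact_mod_cast (by nlinarith [hy0 i] : y i ^ 2 ≤ (g + 1) * y i)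
  have hlin : A * (g + 1) * ∑ i, (y i : ℝ) ≤ t * ((fun i => (y i : ℝ)) ⬝ᵥ lamvec g C) := by
    rw [dotProduct, mul_sum, mul_sum]
    refine sum_le_sum fun i _ => ?_
    have := mul_le_mul_of_nonneg_right (ht i) (show (0 : ℝ) ≤ y i by exact_mod_cast hy0 i)
    linarith
  have := mul_le_mul_of_nonneg_left hsq hA0
  linarith [(abs_le.1 (hA y)).1]

theorem mul_add_residual_add_nonneg_of_one_le (hA0 : 0 ≤ A)
    (hA : ∀ y : Fin g → ℤ, |residual g C Zs ν (fun i => (y i : ℝ))| ≤ A * ∑ i, (y i : ℝ) ^ 2)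
    (hδ : (A + |t| * ∑ i, |lamvec g C i|) * (g * (g + 1) * (g + 5)) ≤ δ) (hν : ν ≤ g + 1)
    {y : Fin g → ℤ} {c : ℤ} (hc : 1 ≤ c) (hy : energy y = 2 * pad y ν + 2 * c) :
    0 ≤ δ * c + residual g C Zs ν (fun i => (y i : ℝ))
      + t * ((fun i => (y i : ℝ)) ⬝ᵥ lamvec g C) := by
  have hE : energy y ≤ 4 * c + g + 1 := by
    have := sum_range_sq_le (pad_zero y) (pad_of_lt y (lt_add_one g)) hν
    rw [← energy] at this
    push_cast at this
    linarith
  have hs : ∑ i, (y i : ℝ) ^ 2 ≤ g * (g + 1) * (g + 5) * c := by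
    have hg : (0 : ℤ) ≤ g * (g + 1) := by positivity
    have : ∑ i, y i ^ 2 ≤ (g : ℤ) * (g + 1) * (g + 5) * c :=
      calc ∑ i, y i ^ 2 ≤ g * (g + 1) * energy y := by linarith [sum_sq_le_energy y]
        _ ≤ g * (g + 1) * (4 * c + g + 1) := mul_le_mul_of_nonneg_left hE hg
        _ ≤ g * (g + 1) * (g + 5) * c := by
          nlinarith [mul_nonneg hg (mul_nonneg (by positivity : (0 : ℤ) ≤ g + 1) (sub_nonneg.2 hc))]
    exact_mod_cast this
  have hlam : |t * ((fun i => (y i : ℝ)) ⬝ᵥ lamvec g C)|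
      ≤ |t| * ((∑ i, |lamvec g C i|) * ∑ i, (y i : ℝ) ^ 2) := by
    rw [abs_mul]
    exact mul_le_mul_of_nonneg_left (abs_dotProduct_le (abs_intCast_le_sum_sq y)) (abs_nonneg t)
  have hB : 0 ≤ A + |t| * ∑ i, |lamvec g C i| := by positivity
  have := mul_le_mul_of_nonneg_left hs hB
  have hc' : (1 : ℝ) ≤ c := by exact_mod_cast hc
  nlinarith [(abs_le.1 (hA y)).1, (abs_le.1 hlam).1]

theorem mem_Dset_stairVec (hν : ν ≤ g + 1) (hA0 : 0 ≤ A)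
    (hA : ∀ y : Fin g → ℤ, |residual g C Zs ν (fun i => (y i : ℝ))| ≤ A * ∑ i, (y i : ℝ) ^ 2)
    (ht : ∀ i, A * (g + 1) ≤ t * lamvec g C i)
    (hδ : (A + |t| * ∑ i, |lamvec g C i|) * (g * (g + 1) * (g + 5)) ≤ δ) :
    (fun i => Zs i - ν * (Lc g C + δ) * e1 g i + t * lamvec g C i)
      ∈ Dset g (Kmat g C + δ • Jmat g) (stairVec g ν) := by
  refine mem_Dset_of_forall_le fun x => ?_
  rw [thetaTerm_eq_add ((Kmat_isSymm C).add (Jmat_isSymm.smul δ)) (stairVec g ν) x]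
  set y : Fin g → ℤ := fun i => x i - stairVec g ν i
  have hZ : (fun i => Zs i - ν * (Lc g C + δ) * e1 g i + t * lamvec g C i)
      = Zs - (ν * (Lc g C + δ)) • e1 g + t • lamvec g C := by
    funext i; simp only [Pi.add_apply, Pi.sub_apply, Pi.smul_apply, smul_eq_mul]
  obtain ⟨c, hc0, hc⟩ := exists_sum_range_sq_eq (pad_zero y) (pad_of_lt y (lt_add_one g)) hν
  rw [← energy] at hc
  have hsplit : 1 / 2 * ((fun i => (y i : ℝ)) ᵥ* (Kmat g C + δ • Jmat g) ⬝ᵥ fun i => (y i : ℝ))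
      + (fun i => (stairVec g ν i : ℝ)) ᵥ* (Kmat g C + δ • Jmat g) ⬝ᵥ (fun i => (y i : ℝ))
      + (fun i => (y i : ℝ)) ⬝ᵥ (fun i => Zs i - ν * (Lc g C + δ) * e1 g i + t * lamvec g C i)
      = δ * c + residual g C Zs ν (fun i => (y i : ℝ))
        + t * ((fun i => (y i : ℝ)) ⬝ᵥ lamvec g C) := by
    have hcR : (energy y : ℝ) = 2 * pad (fun i => (y i : ℝ)) ν + 2 * c := by
      rw [pad_intCast]; exact_mod_cast hc
    rw [hZ]
    simp only [vecMul_add, vecMul_smul, add_dotProduct, smul_dotProduct, smul_eq_mul,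
      intCast_vecMul_Jmat_dotProduct, vecMul_stairVec_Jmat_dotProduct hν, dotProduct_add,
      dotProduct_sub, dotProduct_smul, residual, hcR]
    rw [dotProduct_comm (e1 g)]
    ring
  rw [hsplit]
  rcases (show c = 0 ∨ 1 ≤ c by omega) with rfl | hc1
  · simpa using residual_add_nonneg_of_energy_eq hν hA0 hA ht (by simpa using hc)
  · linarith [mul_add_residual_add_nonneg_of_one_le hA0 hA hδ hν hc1 hc]

end Estimates

end TropToda

open TropToda in
theorem Dtil_regions_general
    (g : ℕ) (C : ℤ → ℝ) (hC : Generic g C)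
    (Zs : Fin g → ℝ) (n0 : ℤ) :
    ∃ t0 : ℤ, ∀ t : ℤ, t0 ≤ t → ∃ δ0 : ℝ, 0 < δ0 ∧ ∀ δ : ℝ, δ0 ≤ δ →
      ∀ n : ℤ, n0 ≤ n → n ≤ n0 + g + 1 →
        (fun i : Fin g =>
            Zs i - ((n : ℝ) - (n0 : ℝ)) * (Lc g C + δ) * e1 g i + (t : ℝ) * lamvec g C i)
          ∈ Dset g (Kmat g C + δ • Jmat g)
              (fun i : Fin g => max 0 (n - n0 - 1 - (i : ℕ))) := by
  obtain ⟨A, hA0, hA⟩ := exists_abs_residual_le g C Zs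
  have hlarge : ∀ᶠ t : ℤ in Filter.atTop, ∀ i, A * (g + 1) ≤ t * lamvec g C i :=
    Filter.eventually_all.2 fun i =>
      (tendsto_intCast_atTop_atTop.atTop_mul_const (lamvec_pos hC i)).eventually_ge_atTop _
  obtain ⟨t0, ht0⟩ := Filter.eventually_atTop.1 hlarge
  refine ⟨t0, fun t ht => ⟨max 1 ((A + |(t : ℝ)| * ∑ i, |lamvec g C i|) * (g * (g + 1) * (g + 5))),
    lt_max_of_lt_left one_pos, fun δ hδ n hn0 hn1 => ?_⟩⟩
  obtain ⟨ν, rfl⟩ : ∃ ν : ℕ, n = n0 + ν := ⟨(n - n0).toNat, by omega⟩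
  have hm : (fun i : Fin g => max 0 (n0 + ν - n0 - 1 - (i : ℕ))) = stairVec g ν := by
    funext i; simp only [stairVec]; ring_nf
  rw [hm, show ((n0 + ν : ℤ) : ℝ) - n0 = ν by push_cast; ring]
  exact mem_Dset_stairVec (by omega) hA0 (hA ν (by omega)) (ht0 t ht) (le_of_max_le_right hδ)

open TropToda in
/-- for `1 ≪ t ≪ δ` the points `Z* − (n−n_0)(L+δ)e_1 + tλ⃗` lie in the
fundamental regions `D̃_{m_n}` with `m_n = 𝕀_1 + ⋯ + 𝕀_{n−n_0−1}`. -/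
theorem Dtil_regions
    (g : ℕ) (hg : 0 < g) (C : ℤ → ℝ) (hC : Generic g C)
    (Zs : Fin g → ℝ) (n0 : ℤ) :
    ∃ t0 : ℤ, ∀ t : ℤ, t0 ≤ t → ∃ δ0 : ℝ, 0 < δ0 ∧ ∀ δ : ℝ, δ0 ≤ δ →
      ∀ n : ℤ, n0 ≤ n → n ≤ n0 + g + 1 →
        (fun i : Fin g =>
            Zs i - ((n : ℝ) - (n0 : ℝ)) * (Lc g C + δ) * e1 g i + (t : ℝ) * lamvec g C i)
          ∈ Dset g (Kmat g C + δ • Jmat g)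
              (fun i : Fin g => max 0 (n - n0 - 1 - (i : ℕ))) :=
  Dtil_regions_general g C hC Zs n0
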